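/- Define F(δ) = (1/(πD)) ∫_{−δ/2}^{(2π/D − δ)/2} sin²(Dy)/sin²(y) dy for δ ∈ [0, 2π/D] and integer D ≥ 2. Then F'(δ) = (1/(2πD))·(sin²(Dδ/2)/sin²(δ/2) − sin²(Dδ/2)/sin²((2π/D − δ)/2)), F'(δ) > 0 for 0 < δ < π/D, F'(δ) < 0 for π/D < δ < 2π/D, and F(0) = F(2π/D); hence F attains its minimum on [0, 2π/D] at the endpoints. -/

import Mathlib

/-!
Substituting `y ↦ -y` and using that the kernel is even gives `F (2π/D - δ) = F δ`; in particular
`F 0 = F (2π/D)`, and it suffices to study `F` on `[0, π/D]`. The fundamental theorem of calculus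
at the two moving endpoints gives `F'`, where both kernel values have numerator `sin² (D δ/2)`
because `sin (D (π/D - δ/2)) = sin (π - D δ/2)`. For `0 < δ < π/D` we have
`0 < δ/2 < π/D - δ/2 ≤ π/2`, where `sin` increases, so `F' > 0`; thus `F` increases on `[0, π/D]`
and, by the symmetry, its minimum over `[0, 2π/D]` is `F 0`.
-/

open Real MeasureTheory Set

noncomputable def Fint (D : ℕ) (δ : ℝ) : ℝ :=
  (1 / (Real.pi * D)) *
    ∫ y in (-δ / 2)..((2 * Real.pi / D - δ) / 2), Real.sin (D * y) ^ 2 / Real.sin y ^ 2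

-- At the zeros of `sin` this takes the junk value `0` instead of its limit `D ^ 2`.
noncomputable def fejerKernel (D : ℕ) (y : ℝ) : ℝ := sin (D * y) ^ 2 / sin y ^ 2

theorem abs_sin_nat_mul_le (n : ℕ) (x : ℝ) : |sin (n * x)| ≤ n * |sin x| := by
  induction n with
  | zero => simp
  | succ n ih =>
    calc |sin ((n + 1 : ℕ) * x)| = |sin (n * x) * cos x + cos (n * x) * sin x| := by
          push_cast; rw [add_mul, one_mul, sin_add]
      _ ≤ |sin (n * x)| * |cos x| + |cos (n * x)| * |sin x| := by
          rw [← abs_mul, ← abs_mul]; exact abs_add_le _ _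
      _ ≤ n * |sin x| * 1 + 1 * |sin x| := by
          gcongr
          · exact abs_cos_le_one x
          · exact abs_cos_le_one _
      _ = (n + 1 : ℕ) * |sin x| := by push_cast; ring

namespace fejerKernel

theorem nonneg (D : ℕ) (y : ℝ) : 0 ≤ fejerKernel D y := by
  unfold fejerKernel; positivity

theorem le_sq (D : ℕ) (y : ℝ) : fejerKernel D y ≤ (D : ℝ) ^ 2 := by
  rcases eq_or_ne (sin y) 0 with hy | hy
  · simp [fejerKernel, hy]
  · rw [fejerKernel, div_le_iff₀ (by positivity), ← sq_abs, ← sq_abs (sin y), ← mul_pow]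
    gcongr
    exact abs_sin_nat_mul_le D y

theorem neg (D : ℕ) (y : ℝ) : fejerKernel D (-y) = fejerKernel D y := by
  simp [fejerKernel]

theorem continuousAt {D : ℕ} {y : ℝ} (hy : sin y ≠ 0) : ContinuousAt (fejerKernel D) y :=
  ContinuousAt.div (by fun_prop) (by fun_prop) (pow_ne_zero 2 hy)

theorem locallyIntegrable (D : ℕ) : LocallyIntegrable (fejerKernel D) := by
  refine (locallyIntegrable_const ((D : ℝ) ^ 2)).mono ?_ (Filter.Eventually.of_forall fun y => ?_)
  · exact (by unfold fejerKernel; fun_prop : Measurable (fejerKernel D)).aestronglyMeasurable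
  · rw [norm_of_nonneg (nonneg D y), norm_of_nonneg (by positivity)]
    exact le_sq D y

end fejerKernel

namespace MeasureTheory.LocallyIntegrable

variable {f u v : ℝ → ℝ}

theorem intervalIntegrable (hf : LocallyIntegrable f) (a b : ℝ) :
    IntervalIntegrable f volume a b :=
  intervalIntegrable_iff.mpr <| (hf.integrableOn_isCompact isCompact_uIcc).mono_set uIoc_subset_uIcc

theorem intervalIntegral_eq_sub (hf : LocallyIntegrable f) (a b : ℝ) :
    ∫ y in a..b, f y = (∫ y in 0..b, f y) - ∫ y in 0..a, f y :=
  (intervalIntegral.integral_interval_sub_left (hf.intervalIntegrable 0 b)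
    (hf.intervalIntegrable 0 a)).symm

theorem continuous_intervalIntegral (hf : LocallyIntegrable f)
    (hu : Continuous u) (hv : Continuous v) : Continuous fun t => ∫ y in u t..v t, f y := by
  have hprim := intervalIntegral.continuous_primitive hf.intervalIntegrable 0
  rw [funext fun t => hf.intervalIntegral_eq_sub (u t) (v t)]
  exact (hprim.comp hv).sub (hprim.comp hu)

theorem hasDerivAt_intervalIntegral (hf : LocallyIntegrable f) {x u' v' : ℝ}
    (hu : HasDerivAt u u' x) (hv : HasDerivAt v v' x)
    (hfu : ContinuousAt f (u x)) (hfv : ContinuousAt f (v x)) :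
    HasDerivAt (fun t => ∫ y in u t..v t, f y) (f (v x) * v' - f (u x) * u') x := by
  have hprim {c : ℝ} (hc : ContinuousAt f c) : HasDerivAt (fun b => ∫ y in 0..b, f y) (f c) c :=
    intervalIntegral.integral_hasDerivAt_right (hf.intervalIntegrable 0 c)
      hf.aestronglyMeasurable.stronglyMeasurableAtFilter hc
  rw [funext fun t => hf.intervalIntegral_eq_sub (u t) (v t)]
  exact ((hprim hfv).comp x hv).sub ((hprim hfu).comp x hu)

end MeasureTheory.LocallyIntegrable

theorem sin_sq_lt_sin_sq {x y : ℝ} (hx : 0 ≤ x) (hxy : x < y) (hy : y ≤ π / 2) :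
    sin x ^ 2 < sin y ^ 2 :=
  pow_lt_pow_left₀
    (strictMonoOn_sin ⟨by linarith [pi_pos], by linarith⟩ ⟨by linarith [pi_pos], hy⟩ hxy)
    (sin_nonneg_of_nonneg_of_le_pi hx (by linarith [pi_pos])) two_ne_zero

theorem Fint_two_pi_div_sub (D : ℕ) (δ : ℝ) : Fint D (2 * π / D - δ) = Fint D δ := by
  unfold Fint
  congr 1
  rw [show (2 * π / D - (2 * π / D - δ)) / 2 = -(-δ / 2) by ring,
    show -(2 * π / D - δ) / 2 = -((2 * π / D - δ) / 2) by ring,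
    ← intervalIntegral.integral_comp_neg]
  simp only [mul_neg, sin_neg, neg_sq]

theorem continuous_Fint (D : ℕ) : Continuous (Fint D) :=
  continuous_const.mul <|
    (fejerKernel.locallyIntegrable D).continuous_intervalIntegral (by fun_prop) (by fun_prop)

theorem hasDerivAt_Fint {D : ℕ} (hD : D ≠ 0) {δ : ℝ} (hδ : δ ∈ Ioo 0 (2 * π / D)) :
    HasDerivAt (Fint D)
      ((1 / (2 * π * D)) *
        (sin (D * δ / 2) ^ 2 / sin (δ / 2) ^ 2 -
          sin (D * δ / 2) ^ 2 / sin ((2 * π / D - δ) / 2) ^ 2)) δ := by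
  obtain ⟨hδ0, hδD⟩ := hδ
  have hπD : 2 * π / D ≤ 2 * π :=
    div_le_self (by positivity) (by exact_mod_cast Nat.one_le_iff_ne_zero.mpr hD)
  have hsin_left : sin (-δ / 2) ≠ 0 := by
    rw [neg_div, sin_neg, neg_ne_zero]
    exact (sin_pos_of_pos_of_lt_pi (by linarith) (by linarith)).ne'
  have hsin_right : sin ((2 * π / D - δ) / 2) ≠ 0 :=
    (sin_pos_of_pos_of_lt_pi (by linarith) (by linarith)).ne'
  have hu : HasDerivAt (fun t => -t / 2) (-1 / 2) δ := ((hasDerivAt_id δ).neg).div_const 2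
  have hv : HasDerivAt (fun t => (2 * π / D - t) / 2) (-1 / 2) δ :=
    ((hasDerivAt_id δ).const_sub _).div_const 2
  have hu_val : fejerKernel D (-δ / 2) = sin (D * δ / 2) ^ 2 / sin (δ / 2) ^ 2 := by
    rw [neg_div, fejerKernel.neg, fejerKernel, mul_div_assoc]
  have hv_val : fejerKernel D ((2 * π / D - δ) / 2) =
      sin (D * δ / 2) ^ 2 / sin ((2 * π / D - δ) / 2) ^ 2 := by
    rw [fejerKernel, show (D : ℝ) * ((2 * π / D - δ) / 2) = π - D * δ / 2 by field_simp,
      sin_pi_sub]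
  refine (((fejerKernel.locallyIntegrable D).hasDerivAt_intervalIntegral
    hu hv (fejerKernel.continuousAt hsin_left) (fejerKernel.continuousAt hsin_right)).const_mul
    (1 / (π * D))).congr_deriv ?_
  rw [hu_val, hv_val]
  field_simp
  ring

theorem deriv_Fint_pos {D : ℕ} (hD : 2 ≤ D) {δ : ℝ} (hδ0 : 0 < δ) (hδ : δ < π / D) :
    0 < deriv (Fint D) δ := by
  have hDpos : (0 : ℝ) < D := by positivity
  have hπD : π / D ≤ π / 2 := div_le_div_of_nonneg_left pi_pos.le two_pos (by exact_mod_cast hD)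
  have hright : (2 * π / D - δ) / 2 = π / D - δ / 2 := by ring
  rw [(hasDerivAt_Fint (by omega) ⟨hδ0, by rw [mul_div_assoc]; linarith⟩).deriv]
  have hnum : 0 < sin (D * δ / 2) ^ 2 := by
    have : δ * D < π := (lt_div_iff₀ hDpos).mp hδ
    have := sin_pos_of_pos_of_lt_pi (x := D * δ / 2) (by positivity) (by linarith)
    positivity
  have hden0 : 0 < sin (δ / 2) ^ 2 := by
    have := sin_pos_of_pos_of_lt_pi (x := δ / 2) (by positivity) (by linarith)
    positivity
  have hden : sin (δ / 2) ^ 2 < sin ((2 * π / D - δ) / 2) ^ 2 :=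
    sin_sq_lt_sin_sq (by positivity) (by linarith) (by linarith)
  exact mul_pos (by positivity) (sub_pos.mpr (div_lt_div_of_pos_left hnum hden0 hden))

theorem deriv_Fint_neg {D : ℕ} (hD : 2 ≤ D) {δ : ℝ} (hδ : π / D < δ) (hδD : δ < 2 * π / D) :
    deriv (Fint D) δ < 0 := by
  have hsymm : Fint D = fun t => Fint D (2 * π / D - t) :=
    funext fun t => (Fint_two_pi_div_sub D t).symm
  rw [mul_div_assoc] at hδD
  rw [hsymm, deriv_comp_const_sub, neg_lt_zero]
  exact deriv_Fint_pos hD (by rw [mul_div_assoc]; linarith) (by rw [mul_div_assoc]; linarith)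

theorem strictMonoOn_Fint {D : ℕ} (hD : 2 ≤ D) : StrictMonoOn (Fint D) (Icc 0 (π / D)) :=
  strictMonoOn_of_deriv_pos (convex_Icc _ _) (continuous_Fint D).continuousOn fun x hx => by
    rw [interior_Icc] at hx
    exact deriv_Fint_pos hD hx.1 hx.2

theorem Fint_zero_le {D : ℕ} (hD : 2 ≤ D) {δ : ℝ} (hδ : δ ∈ Icc 0 (2 * π / D)) :
    Fint D 0 ≤ Fint D δ := by
  have hπD : 0 ≤ π / D := by positivity
  have hmono := (strictMonoOn_Fint hD).monotoneOn
  rw [mul_div_assoc] at hδ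
  rcases le_or_gt δ (π / D) with h | h
  · exact hmono ⟨le_rfl, hπD⟩ ⟨hδ.1, h⟩ hδ.1
  · rw [← Fint_two_pi_div_sub D δ, mul_div_assoc]
    exact hmono ⟨le_rfl, hπD⟩ ⟨by linarith [hδ.2], by linarith⟩ (by linarith [hδ.2])

theorem Fint_deriv_and_min (D : ℕ) (hD : 2 ≤ D) :
    (∀ δ ∈ Set.Ioo (0 : ℝ) (2 * Real.pi / D),
      HasDerivAt (Fint D)
        ((1 / (2 * Real.pi * D)) *
          (Real.sin (D * δ / 2) ^ 2 / Real.sin (δ / 2) ^ 2 -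
            Real.sin (D * δ / 2) ^ 2 / Real.sin ((2 * Real.pi / D - δ) / 2) ^ 2)) δ) ∧
    (∀ δ : ℝ, 0 < δ → δ < Real.pi / D → 0 < deriv (Fint D) δ) ∧
    (∀ δ : ℝ, Real.pi / D < δ → δ < 2 * Real.pi / D → deriv (Fint D) δ < 0) ∧
    Fint D 0 = Fint D (2 * Real.pi / D) ∧
    (∀ δ ∈ Set.Icc (0 : ℝ) (2 * Real.pi / D), Fint D 0 ≤ Fint D δ) :=
  ⟨fun _ hδ => hasDerivAt_Fint (by omega) hδ, fun _ => deriv_Fint_pos hD,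
    fun _ => deriv_Fint_neg hD, by simpa using (Fint_two_pi_div_sub D 0).symm,
    fun _ => Fint_zero_le hD⟩
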